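/- Let ψ be a nontrivial good character of F of conductor 1. Let α_1,…,α_m ∈ F^× and γ_1,…,γ_m ∈ Γ satisfy ν(α_i) < −γ_i for each i, and let f_i ∈ 𝓛^{γ_i} for each i. If the function ∑_{i=1}^m f_i·ψ_{α_i} belongs to 𝓛(F), then ∫^F ∑_{i=1}^m f_i(x)ψ_{α_i}(x) dx = 0. -/

import Mathlib

/-
Since `ψ` has conductor `1`, there is `x₀ ∈ O_F` with `ψ(x₀) ≠ 1`. Put `b = x₀ / αₘ`; then
`ν(b) > γₘ`, so every function in `𝓛^{γₘ}` is `b`-periodic. Hence for `H = ∑ᵢ fᵢ ψ_{αᵢ}` and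
`c = ψ(αₘ b) = ψ(x₀)` the `m`-th term cancels in `H(· + b) - c H`, which is again a sum of the same
shape with `m - 1` characters. As `∫^F` is translation invariant, induction on `m` gives
`(1 - c) ∫^F H = ∫^F (H(· + b) - c H) = 0`.
-/

noncomputable section

open MeasureTheory

/-- A field `F` with a split valuation `ν : F^× → Γ` (split by `t`), with residue field `k`,
residue map `ρ : O_F → k`, where `Γ` has a minimal positive element `one`. -/
structure LiftSetup (Γ F k : Type*) [AddCommGroup Γ] [LinearOrder Γ] [IsOrderedAddMonoid Γ] [Field F] [Field k] where
  /-- the valuation (recorded on nonzero elements) -/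
  ν : F → Γ
  /-- the splitting homomorphism `t : Γ → F^×` -/
  t : Γ → F
  /-- the residue map (recorded on the valuation ring) -/
  ρ : F → k
  /-- the minimal positive element of `Γ` -/
  one : Γ
  one_pos : 0 < one
  one_min : ∀ γ : Γ, 0 < γ → one ≤ γ
  ν_mul : ∀ x y : F, x ≠ 0 → y ≠ 0 → ν (x * y) = ν x + ν y
  ν_add : ∀ x y : F, x ≠ 0 → y ≠ 0 → x + y ≠ 0 → min (ν x) (ν y) ≤ ν (x + y)
  t_ne : ∀ γ : Γ, t γ ≠ 0
  t_add : ∀ γ δ : Γ, t (γ + δ) = t γ * t δ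
  ν_t : ∀ γ : Γ, ν (t γ) = γ
  ρ_add : ∀ x y : F, (x = 0 ∨ 0 ≤ ν x) → (y = 0 ∨ 0 ≤ ν y) → ρ (x + y) = ρ x + ρ y
  ρ_mul : ∀ x y : F, (x = 0 ∨ 0 ≤ ν x) → (y = 0 ∨ 0 ≤ ν y) → ρ (x * y) = ρ x * ρ y
  ρ_one : ρ 1 = 1
  ρ_surj : ∀ u : k, ∃ x : F, (x = 0 ∨ 0 ≤ ν x) ∧ ρ x = u
  ρ_eq_zero : ∀ x : F, (x = 0 ∨ 0 ≤ ν x) → (ρ x = 0 ↔ (x = 0 ∨ 0 < ν x))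

namespace LiftSetup

variable {Γ F k : Type*} [AddCommGroup Γ] [LinearOrder Γ] [IsOrderedAddMonoid Γ] [Field F] [Field k]
variable (S : LiftSetup Γ F k)

/-- The ring of integers `O_F` of the valuation. -/
def integers : Set F := {x | x = 0 ∨ 0 ≤ S.ν x}

/-- The translated fractional ideal `a + t(γ)O_F`. -/
def fracIdeal (a : F) (γ : Γ) : Set F := {x | (x - a) * S.t (-γ) ∈ S.integers}

/-- The lift `f^{a,γ}` of a function `f` on the residue field `k`:
`f^{a,γ}(x) = f(ρ((x-a)t(-γ)))` for `x ∈ a + t(γ)O_F` and `0` otherwise. -/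
def lift {A : Type*} [Zero A] (f : k → A) (a : F) (γ : Γ) : F → A :=
  (S.fracIdeal a γ).indicator fun x => f (S.ρ ((x - a) * S.t (-γ)))

/-- The homomorphism `η : F^× → k^×`, `x ↦ ρ(x t(-ν x))`. -/
def η (x : F) : k := S.ρ (x * S.t (-S.ν x))

end LiftSetup

section CGamma

variable (Γ : Type*) [AddCommGroup Γ] [LinearOrder Γ] [IsOrderedAddMonoid Γ]

instance : IsDomain (AddMonoidAlgebra ℂ Γ) := NoZeroDivisors.to_isDomain _

/-- `ℂ(Γ)`: the field of fractions of the complex group algebra of `Γ`. -/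
abbrev CGamma : Type _ := FractionRing (AddMonoidAlgebra ℂ Γ)

/-- The canonical embedding `ℂ → ℂ(Γ)`. -/
def embC : ℂ →+* CGamma Γ :=
  (algebraMap (AddMonoidAlgebra ℂ Γ) (CGamma Γ)).comp AddMonoidAlgebra.singleZeroRingHom

variable {Γ}

/-- The basis element `X^γ` of `ℂ(Γ)`. -/
def Xp (γ : Γ) : CGamma Γ :=
  algebraMap (AddMonoidAlgebra ℂ Γ) (CGamma Γ) (AddMonoidAlgebra.single γ 1)

end CGamma

section GoodChar

variable {Γ F k : Type*} [AddCommGroup Γ] [LinearOrder Γ] [IsOrderedAddMonoid Γ] [Field F] [Field k] [TopologicalSpace k]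

/-- `ψ` is a nontrivial good character of `F` of conductor `𝔣`: a homomorphism from the
additive group of `F` to the complex unit circle, trivial on `t(𝔣)O_F`, nontrivial on
`t(𝔣-1)O_F`, whose induced map `ψ̄` on the residue field `k` (given by
`ψ̄(ρ(x)) = ψ(t(𝔣-1)x)` for `x ∈ O_F`) is well defined and continuous. -/
def LiftSetup.IsGoodCharacter (S : LiftSetup Γ F k) (ψ : F → ℂ) (𝔣 : Γ) : Prop :=
  (∀ x y : F, ψ (x + y) = ψ x * ψ y) ∧
  (∀ x : F, ‖ψ x‖ = 1) ∧
  (∀ x ∈ S.integers, ψ (S.t 𝔣 * x) = 1) ∧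
  (∃ x ∈ S.integers, ψ (S.t (𝔣 - S.one) * x) ≠ 1) ∧
  (∃ ψbar : k → ℂ, Continuous ψbar ∧
    ∀ x ∈ S.integers, ψbar (S.ρ x) = ψ (S.t (𝔣 - S.one) * x))

end GoodChar

section LFmu

variable {Γ F k : Type*} [AddCommGroup Γ] [LinearOrder Γ] [IsOrderedAddMonoid Γ] [Field F] [Field k]
  [MeasurableSpace k]

open MeasureTheory

/-- `𝓛(F)`: the `ℂ(Γ)`-span of the lifts of Haar-integrable functions on `k`. -/
def LFmu (S : LiftSetup Γ F k) (μ : Measure k) : Submodule (CGamma Γ) (F → CGamma Γ) :=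
  Submodule.span (CGamma Γ)
    {g | ∃ f : k → ℂ, Integrable f μ ∧ ∃ (a : F) (γ : Γ),
        g = S.lift (fun u => embC Γ (f u)) a γ}

theorem liftC_mem_mu (S : LiftSetup Γ F k) (μ : Measure k)
    {f : k → ℂ} (hf : Integrable f μ) (a : F) (γ : Γ) :
    S.lift (fun u => embC Γ (f u)) a γ ∈ LFmu S μ :=
  Submodule.subset_span ⟨f, hf, a, γ, rfl⟩

/-- `𝓛^γ`: the complex span of the lifts of Haar-integrable functions at height `γ`. -/
def Lheight (S : LiftSetup Γ F k) (μ : Measure k) (γ : Γ) : Submodule ℂ (F → ℂ) :=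
  Submodule.span ℂ {g | ∃ f : k → ℂ, Integrable f μ ∧ ∃ a : F, g = S.lift f a γ}

end LFmu

section CharacterSums

variable {A R : Type*} [Semiring A] [CommRing R]

theorem sum_mul_char_add_sub_mul_sum {ψ : A → R} (hψ : ∀ x y, ψ (x + y) = ψ x * ψ y) {m : ℕ}
    (f : Fin (m + 1) → A → R) (α : Fin (m + 1) → A) (b x : A)
    (hper : f (Fin.last m) (x + b) = f (Fin.last m) x) :
    (∑ i, f i (x + b) * ψ (α i * (x + b))) - ψ (α (Fin.last m) * b) * ∑ i, f i x * ψ (α i * x)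
      = ∑ i : Fin m, (ψ (α i.castSucc * b) * f i.castSucc (x + b)
          - ψ (α (Fin.last m) * b) * f i.castSucc x) * ψ (α i.castSucc * x) := by
  rw [Finset.mul_sum, ← Finset.sum_sub_distrib, Fin.sum_univ_castSucc, mul_add, hψ, hper]
  refine (add_eq_left.mpr (by ring)).trans (Finset.sum_congr rfl fun i _ => ?_)
  rw [mul_add, hψ]
  ring

end CharacterSums

namespace LiftSetup

variable {Γ F k : Type*} [AddCommGroup Γ] [LinearOrder Γ] [IsOrderedAddMonoid Γ] [Field F] [Field k]
variable (S : LiftSetup Γ F k)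

theorem ν_one : S.ν 1 = 0 := by
  simpa using S.ν_mul 1 1 one_ne_zero one_ne_zero

theorem ν_neg (x : F) (hx : x ≠ 0) : S.ν (-x) = S.ν x := by
  have h2 : S.ν (-1 : F) + S.ν (-1) = 0 := by
    rw [← S.ν_mul _ _ (by simp) (by simp), neg_mul_neg, one_mul, ν_one]
  have h1 : S.ν (-1 : F) = 0 := by
    rcases lt_trichotomy (S.ν (-1 : F)) 0 with h | h | h
    · exact absurd h2 (add_neg h h).ne
    · exact h
    · exact absurd h2 (add_pos h h).ne'
  rw [← neg_one_mul, S.ν_mul _ _ (by simp) hx, h1, zero_add]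

theorem ν_inv (x : F) (hx : x ≠ 0) : S.ν x⁻¹ = -S.ν x := by
  have h := S.ν_mul x x⁻¹ hx (inv_ne_zero hx)
  rw [mul_inv_cancel₀ hx, ν_one] at h
  exact eq_neg_of_add_eq_zero_right h.symm

theorem t_zero : S.t 0 = 1 := by
  have h : S.t 0 * S.t 0 = S.t 0 * 1 := by rw [← S.t_add, add_zero, mul_one]
  exact mul_left_cancel₀ (S.t_ne 0) h

theorem add_mem_integers {x y : F} (hx : x ∈ S.integers) (hy : y ∈ S.integers) :
    x + y ∈ S.integers := by
  rcases eq_or_ne x 0 with rfl | hx0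
  · simpa using hy
  rcases eq_or_ne y 0 with rfl | hy0
  · simpa using hx
  rcases eq_or_ne (x + y) 0 with hxy | hxy
  · exact Or.inl hxy
  exact Or.inr ((le_min (hx.resolve_left hx0) (hy.resolve_left hy0)).trans
    (S.ν_add x y hx0 hy0 hxy))

theorem neg_mem_integers {x : F} (hx : x ∈ S.integers) : -x ∈ S.integers := by
  rcases eq_or_ne x 0 with rfl | hx0
  · simpa using hx
  exact Or.inr (by rw [S.ν_neg x hx0]; exact hx.resolve_left hx0)

theorem lt_ν_mul_inv {x α : F} {γ : Γ} (hx : x ≠ 0) (hνx : 0 ≤ S.ν x) (hα : α ≠ 0)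
    (h : S.ν α < -γ) : γ < S.ν (x * α⁻¹) := by
  rw [S.ν_mul _ _ hx (inv_ne_zero hα), S.ν_inv _ hα]
  exact (lt_neg.mp h).trans_le (le_add_of_nonneg_left hνx)

theorem lift_add_right {A : Type*} [Zero A] (f : k → A) (a b : F) (γ : Γ) (x : F) :
    S.lift f a γ (x + b) = S.lift f (a - b) γ x := by
  have hx : x + b - a = x - (a - b) := by ring
  classical
  simp only [lift, fracIdeal, Set.indicator_apply, Set.mem_ofPred_eq, hx]

theorem lift_add_of_lt_ν {A : Type*} [Zero A] (f : k → A) (a : F) {b : F} {γ : Γ}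
    (hb0 : b ≠ 0) (hb : γ < S.ν b) (x : F) :
    S.lift f a γ (x + b) = S.lift f a γ x := by
  set c := b * S.t (-γ)
  have hνc : 0 < S.ν c := by
    rw [S.ν_mul _ _ hb0 (S.t_ne _), S.ν_t, ← sub_eq_add_neg]
    exact sub_pos.mpr hb
  have hc : c ∈ S.integers := Or.inr hνc.le
  have hρc : S.ρ c = 0 := (S.ρ_eq_zero c hc).2 (Or.inr hνc)
  have hshift : (x + b - a) * S.t (-γ) = (x - a) * S.t (-γ) + c := by ring
  have hmem : x + b ∈ S.fracIdeal a γ ↔ x ∈ S.fracIdeal a γ := by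
    refine ⟨fun h => ?_, fun h => ?_⟩
    · have := S.add_mem_integers h (S.neg_mem_integers hc)
      rwa [hshift, add_neg_cancel_right] at this
    · change (x + b - a) * S.t (-γ) ∈ S.integers
      rw [hshift]
      exact S.add_mem_integers h hc
  by_cases h : x ∈ S.fracIdeal a γ
  · rw [lift, Set.indicator_of_mem (hmem.2 h), Set.indicator_of_mem h, hshift,
      S.ρ_add _ _ h hc, hρc, add_zero]
  · rw [lift, Set.indicator_of_notMem (mt hmem.1 h), Set.indicator_of_notMem h]

theorem IsGoodCharacter.exists_ne_one [TopologicalSpace k] {S : LiftSetup Γ F k} {ψ : F → ℂ}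
    (hψ : S.IsGoodCharacter ψ S.one) : ∃ x₀, x₀ ≠ 0 ∧ 0 ≤ S.ν x₀ ∧ ψ x₀ ≠ 1 := by
  obtain ⟨hadd, hnorm, -, ⟨x₀, hx₀, hψx₀⟩, -⟩ := hψ
  rw [sub_self, S.t_zero, one_mul] at hψx₀
  have hψ0 : ψ 0 = 1 := by
    have hne : ψ 0 ≠ 0 := norm_ne_zero_iff.mp (by simp [hnorm])
    have h := hadd 0 0
    rw [add_zero] at h
    exact (mul_eq_left₀ hne).mp h.symm
  have hx₀0 : x₀ ≠ 0 := by
    rintro rfl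
    exact hψx₀ hψ0
  exact ⟨x₀, hx₀0, hx₀.resolve_left hx₀0, hψx₀⟩

variable [MeasurableSpace k] (μ : Measure k)

theorem translate_mem_Lheight {γ : Γ} {g : F → ℂ} (hg : g ∈ Lheight S μ γ) (b : F) :
    (fun x => g (x + b)) ∈ Lheight S μ γ := by
  suffices Lheight S μ γ ≤ (Lheight S μ γ).comap (LinearMap.funLeft ℂ ℂ (· + b)) from this hg
  refine Submodule.span_le.mpr ?_
  rintro _ ⟨f, hf, a, rfl⟩
  exact Submodule.subset_span ⟨f, hf, a - b, funext (S.lift_add_right f a b γ)⟩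

theorem translate_mem_LFmu {g : F → CGamma Γ} (hg : g ∈ LFmu S μ) (b : F) :
    (fun x => g (x + b)) ∈ LFmu S μ := by
  suffices LFmu S μ ≤ (LFmu S μ).comap (LinearMap.funLeft (CGamma Γ) (CGamma Γ) (· + b)) from
    this hg
  refine Submodule.span_le.mpr ?_
  rintro _ ⟨f, hf, a, γ, rfl⟩
  exact Submodule.subset_span
    ⟨f, hf, a - b, γ, funext (S.lift_add_right (fun u => embC Γ (f u)) a b γ)⟩

theorem Lheight_apply_add_of_lt_ν {γ : Γ} {g : F → ℂ} (hg : g ∈ Lheight S μ γ) {b : F}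
    (hb0 : b ≠ 0) (hb : γ < S.ν b) (x : F) : g (x + b) = g x := by
  suffices Lheight S μ γ ≤ LinearMap.ker (LinearMap.funLeft ℂ ℂ (· + b) - LinearMap.id) from
    congrFun (sub_eq_zero.mp (this hg)) x
  refine Submodule.span_le.mpr ?_
  rintro _ ⟨f, -, a, rfl⟩
  exact sub_eq_zero.mpr (funext (S.lift_add_of_lt_ν f a hb0 hb))

theorem map_translate_of_map_lift (J : (F → CGamma Γ) →ₗ[CGamma Γ] CGamma Γ)
    (hJ : ∀ f : k → ℂ, Integrable f μ → ∀ (a : F) (γ : Γ),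
      J (S.lift (fun u => embC Γ (f u)) a γ) = embC Γ (∫ u, f u ∂μ) * Xp γ)
    {g : F → CGamma Γ} (hg : g ∈ LFmu S μ) (b : F) : J (fun x => g (x + b)) = J g := by
  suffices LFmu S μ ≤ LinearMap.ker (J ∘ₗ LinearMap.funLeft _ _ (· + b) - J) from
    sub_eq_zero.mp (this hg)
  refine Submodule.span_le.mpr ?_
  rintro _ ⟨f, hf, a, γ, rfl⟩
  have hshift :
      LinearMap.funLeft (CGamma Γ) (CGamma Γ) (· + b) (S.lift (fun u => embC Γ (f u)) a γ)
        = S.lift (fun u => embC Γ (f u)) (a - b) γ :=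
    funext (S.lift_add_right (fun u => embC Γ (f u)) a b γ)
  simp only [SetLike.mem_coe, LinearMap.mem_ker, LinearMap.sub_apply, LinearMap.comp_apply, hshift,
    hJ f hf, sub_self]

theorem map_sum_mul_char_eq_zero (J : (F → CGamma Γ) →ₗ[CGamma Γ] CGamma Γ)
    (hJ : ∀ g ∈ LFmu S μ, ∀ b : F, J (fun x => g (x + b)) = J g)
    {ψ : F → ℂ} (hψ : ∀ x y, ψ (x + y) = ψ x * ψ y)
    {x₀ : F} (hx₀ : x₀ ≠ 0) (hνx₀ : 0 ≤ S.ν x₀) (hψx₀ : ψ x₀ ≠ 1)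
    {m : ℕ} (α : Fin m → F) (hα : ∀ i, α i ≠ 0) (γ : Fin m → Γ) (hlt : ∀ i, S.ν (α i) < -γ i)
    (f : Fin m → F → ℂ) (hf : ∀ i, f i ∈ Lheight S μ (γ i))
    (hmem : (fun x => embC Γ (∑ i, f i x * ψ (α i * x))) ∈ LFmu S μ) :
    J (fun x => embC Γ (∑ i, f i x * ψ (α i * x))) = 0 := by
  induction m with
  | zero =>
    simp only [Finset.univ_eq_empty, Finset.sum_empty, map_zero]
    exact J.map_zero
  | succ m ih =>
    set H : F → CGamma Γ := fun x => embC Γ (∑ i, f i x * ψ (α i * x))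
    set b := x₀ * (α (Fin.last m))⁻¹
    set c := ψ (α (Fin.last m) * b)
    have hc : c = ψ x₀ := by
      simp only [c, b]
      rw [mul_comm x₀, mul_inv_cancel_left₀ (hα _)]
    have hper : ∀ x, f (Fin.last m) (x + b) = f (Fin.last m) x :=
      S.Lheight_apply_add_of_lt_ν μ (hf _) (mul_ne_zero hx₀ (inv_ne_zero (hα _)))
        (S.lt_ν_mul_inv hx₀ hνx₀ (hα _) (hlt _))
    set f' : Fin m → F → ℂ := fun i =>
      ψ (α i.castSucc * b) • (fun x => f i.castSucc (x + b)) - c • f i.castSucc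
    have hf' : ∀ i, f' i ∈ Lheight S μ (γ i.castSucc) := fun i =>
      sub_mem (Submodule.smul_mem _ _ (S.translate_mem_Lheight μ (hf _) b))
        (Submodule.smul_mem _ _ (hf _))
    have hkey : (fun x => embC Γ (∑ i, f' i x * ψ (α i.castSucc * x)))
        = (fun x => H (x + b)) - embC Γ c • H := by
      funext x
      simp only [H, f', Pi.sub_apply, Pi.smul_apply, smul_eq_mul, ← map_mul, ← map_sub]
      exact congrArg (embC Γ) (sum_mul_char_add_sub_mul_sum hψ f α b x (hper x)).symm
    have hmem' : (fun x => embC Γ (∑ i, f' i x * ψ (α i.castSucc * x))) ∈ LFmu S μ := by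
      rw [hkey]
      exact sub_mem (S.translate_mem_LFmu μ hmem b) (Submodule.smul_mem _ _ hmem)
    have hvanish : (1 - embC Γ c) * J H = 0 := by
      have := ih _ (fun i => hα _) _ (fun i => hlt _) f' hf' hmem'
      rwa [hkey, map_sub, map_smul, hJ H hmem, smul_eq_mul, ← one_sub_mul] at this
    have hc1 : 1 - embC Γ c ≠ 0 := by
      rw [sub_ne_zero, ← map_one (embC Γ), (embC Γ).injective.ne_iff, hc]
      exact hψx₀.symm
    exact (mul_eq_zero.mp hvanish).resolve_left hc1

end LiftSetup

open MeasureTheory in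
theorem statement4_general
    {Γ F k : Type*} [AddCommGroup Γ] [LinearOrder Γ] [IsOrderedAddMonoid Γ] [Field F] [Field k]
    [TopologicalSpace k]
    [MeasurableSpace k]
    (μ : Measure k)
    (S : LiftSetup Γ F k)
    (ψ : F → ℂ) (hψ : S.IsGoodCharacter ψ S.one)
    (J : LFmu S μ →ₗ[CGamma Γ] CGamma Γ)
    (hJ : ∀ (f : k → ℂ) (hf : Integrable f μ) (a : F) (γ : Γ),
      J ⟨S.lift (fun u => embC Γ (f u)) a γ, liftC_mem_mu S μ hf a γ⟩
        = embC Γ (∫ u, f u ∂μ) * Xp γ)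
    (m : ℕ) (α : Fin m → F) (hα : ∀ i, α i ≠ 0) (γ : Fin m → Γ)
    (hlt : ∀ i, S.ν (α i) < -(γ i))
    (f : Fin m → (F → ℂ)) (hf : ∀ i, f i ∈ Lheight S μ (γ i))
    (hmem : (fun x => embC Γ (∑ i, f i x * ψ (α i * x))) ∈ LFmu S μ) :
    J ⟨fun x => embC Γ (∑ i, f i x * ψ (α i * x)), hmem⟩ = 0 := by
  obtain ⟨J', hJ'⟩ := LinearMap.exists_extend J
  have hJ'_apply : ∀ g (hg : g ∈ LFmu S μ), J ⟨g, hg⟩ = J' g := fun g hg =>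
    (LinearMap.congr_fun hJ' ⟨g, hg⟩).symm
  have hJ'_lift : ∀ f : k → ℂ, Integrable f μ → ∀ (a : F) (γ : Γ),
      J' (S.lift (fun u => embC Γ (f u)) a γ) = embC Γ (∫ u, f u ∂μ) * Xp γ := fun f hf a γ =>
    (hJ'_apply _ _).symm.trans (hJ f hf a γ)
  obtain ⟨x₀, hx₀, hνx₀, hψx₀⟩ := hψ.exists_ne_one
  rw [hJ'_apply]
  exact S.map_sum_mul_char_eq_zero μ J' (fun g hg => S.map_translate_of_map_lift μ J' hJ'_lift hg)
    hψ.1 hx₀ hνx₀ hψx₀ α hα γ hlt f hf hmem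

open MeasureTheory in
/-- Let `ψ` be a nontrivial good character of `F` of conductor `1`. If
`ν(αᵢ) < -γᵢ` and `fᵢ ∈ 𝓛^{γᵢ}` for each `i`, and `∑ᵢ fᵢ·ψ_{αᵢ}` belongs to `𝓛(F)`, then
`∫^F ∑ᵢ fᵢ(x)ψ_{αᵢ}(x) dx = 0`. -/
theorem statement4
    {Γ F k : Type*} [AddCommGroup Γ] [LinearOrder Γ] [IsOrderedAddMonoid Γ] [Field F] [Field k]
    [TopologicalSpace k] [IsTopologicalRing k] [LocallyCompactSpace k]
    [MeasurableSpace k] [BorelSpace k]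
    (hk_nondiscrete : ¬ IsOpen ({0} : Set k))
    (μ : Measure k) [μ.IsAddHaarMeasure]
    (S : LiftSetup Γ F k)
    (ψ : F → ℂ) (hψ : S.IsGoodCharacter ψ S.one)
    (J : LFmu S μ →ₗ[CGamma Γ] CGamma Γ)
    (hJ : ∀ (f : k → ℂ) (hf : Integrable f μ) (a : F) (γ : Γ),
      J ⟨S.lift (fun u => embC Γ (f u)) a γ, liftC_mem_mu S μ hf a γ⟩
        = embC Γ (∫ u, f u ∂μ) * Xp γ)
    (m : ℕ) (α : Fin m → F) (hα : ∀ i, α i ≠ 0) (γ : Fin m → Γ)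
    (hlt : ∀ i, S.ν (α i) < -(γ i))
    (f : Fin m → (F → ℂ)) (hf : ∀ i, f i ∈ Lheight S μ (γ i))
    (hmem : (fun x => embC Γ (∑ i, f i x * ψ (α i * x))) ∈ LFmu S μ) :
    J ⟨fun x => embC Γ (∑ i, f i x * ψ (α i * x)), hmem⟩ = 0 :=
  statement4_general μ S ψ hψ J hJ m α hα γ hlt f hf hmem
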